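/- Let 1 < p, q < ∞ with 1/p + 1/q = 1. The continuous dual of bv_p is isometrically isomorphic to d_q; explicitly, there exists a linear bijection from bv_p* onto d_q that preserves norms. -/

import Mathlib

noncomputable section

open Filter Topology
open scoped ENNReal

/-- The difference operator: sequences indexed from `0`, representing `(x_k)_{k ≥ 1}`
(so index `n : ℕ` stands for `x_{n+1}`), with the convention `x_0 = 0`. -/
def delta (x : ℕ → ℂ) : ℕ → ℂ := fun n => x n - if n = 0 then 0 else x (n - 1)

/-- The difference operator as a linear equivalence of the space of all sequences,
with inverse given by partial sums. -/
def deltaL : (ℕ → ℂ) ≃ₗ[ℂ] (ℕ → ℂ) where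
  toFun := delta
  invFun y := fun n => ∑ i ∈ Finset.range (n + 1), y i
  map_add' x y := by
    funext n
    simp only [delta, Pi.add_apply]
    split <;> ring
  map_smul' c x := by
    funext n
    simp only [delta, Pi.smul_apply, smul_eq_mul, RingHom.id_apply]
    split <;> ring
  left_inv x := by
    funext n
    induction n with
    | zero => simp [delta]
    | succ k ih =>
      show (∑ i ∈ Finset.range (k + 1 + 1), delta x i) = x (k + 1)
      rw [Finset.sum_range_succ]
      have ih' : (∑ i ∈ Finset.range (k + 1), delta x i) = x k := ih
      rw [ih']
      simp [delta]
  right_inv y := by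
    funext n
    show delta (fun n => ∑ i ∈ Finset.range (n + 1), y i) n = y n
    cases n with
    | zero => simp [delta]
    | succ k => simp [delta, Finset.sum_range_succ]

/-- The space `bv_p`, as a submodule of the space of all complex sequences:
`x ∈ bv_p` iff `Δx ∈ ℓ^p`. -/
def bvSubmodule (p : ℝ≥0∞) : Submodule ℂ (ℕ → ℂ) where
  carrier := {x | Memℓp (delta x) p}
  add_mem' {x y} hx hy := by
    have : delta (x + y) = delta x + delta y := map_add deltaL x y
    simpa [Set.mem_setOf_eq, this] using hx.add hy
  zero_mem' := by
    have : delta (0 : ℕ → ℂ) = 0 := map_zero deltaL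
    simp [Set.mem_setOf_eq, this]
    exact zero_memℓp
  smul_mem' c x hx := by
    have : delta (c • x) = c • delta x := map_smul deltaL c x
    simpa [Set.mem_setOf_eq, this] using hx.const_smul c

/-- The space `bv_p` as a type.  (A `def`, not an `abbrev`, so that it does not pick up
the product topology of the ambient sequence space.) -/
def bv (p : ℝ≥0∞) : Type := ↥(bvSubmodule p)

namespace bv

instance (p : ℝ≥0∞) : AddCommGroup (bv p) :=
  inferInstanceAs (AddCommGroup ↥(bvSubmodule p))

instance (p : ℝ≥0∞) : Module ℂ (bv p) :=
  inferInstanceAs (Module ℂ ↥(bvSubmodule p))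

/-- The underlying sequence of an element of `bv_p`. -/
def seq {p : ℝ≥0∞} (x : bv p) : ℕ → ℂ := Subtype.val (x : ↥(bvSubmodule p))

lemma memℓp_delta {p : ℝ≥0∞} (x : bv p) : Memℓp (delta (seq x)) p :=
  (x : ↥(bvSubmodule p)).2

/-- The difference operator, as a linear map from `bv_p` to `ℓ^p`. -/
def toLp (p : ℝ≥0∞) : bv p →ₗ[ℂ] lp (fun _ : ℕ => ℂ) p where
  toFun x := ⟨delta (seq x), memℓp_delta x⟩
  map_add' x y := by
    ext n
    have : delta (seq x + seq y) = delta (seq x) + delta (seq y) := map_add deltaL _ _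
    change delta (seq (x + y)) n = _
    have hseq : seq (x + y) = seq x + seq y := rfl
    rw [hseq, this]
    rfl
  map_smul' c x := by
    ext n
    have : delta (c • seq x) = c • delta (seq x) := map_smul deltaL c _
    change delta (seq (c • x)) n = _
    have hseq : seq (c • x) = c • seq x := rfl
    rw [hseq, this]
    rfl

lemma toLp_injective (p : ℝ≥0∞) : Function.Injective (toLp p) := by
  intro x y h
  have h' : delta (seq x) = delta (seq y) := by
    have := congrArg (Subtype.val) h
    exact this
  have : seq x = seq y := deltaL.injective h'
  exact Subtype.ext this

noncomputable instance (p : ℝ≥0∞) [Fact (1 ≤ p)] : NormedAddCommGroup (bv p) :=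
  NormedAddCommGroup.induced (bv p) (lp (fun _ : ℕ => ℂ) p) (toLp p) (toLp_injective p)

noncomputable instance (p : ℝ≥0∞) [Fact (1 ≤ p)] : NormedSpace ℂ (bv p) :=
  NormedSpace.induced ℂ (bv p) (lp (fun _ : ℕ => ℂ) p) (toLp p)

end bv

/-- The sequence `b^{(k+1)}`: `1` from position `k` on (positions indexed from `0`). -/
def bSeq (k : ℕ) : ℕ → ℂ := fun n => if k ≤ n then 1 else 0

/-- The sequence `e^{(k+1)}`: `1` exactly at position `k`. -/
def eSeq (k : ℕ) : ℕ → ℂ := fun n => if n = k then 1 else 0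

lemma memℓp_eSeq (p : ℝ≥0∞) [Fact (1 ≤ p)] (k : ℕ) : Memℓp (eSeq k) p := by
  rcases eq_or_ne p ∞ with rfl | hp
  · apply memℓp_infty
    apply Set.Finite.bddAbove
    apply Set.Finite.subset (Set.finite_singleton (0:ℝ) |>.insert 1)
    rintro r ⟨n, rfl⟩
    simp only [eSeq]
    split <;> simp
  · apply memℓp_gen
    apply summable_of_ne_finset_zero (s := {k})
    intro n hn
    simp only [Finset.mem_singleton] at hn
    simp only [eSeq, if_neg hn, norm_zero]
    have hp0 : 0 < p.toReal := by
      have h1 : (1 : ℝ≥0∞) ≤ p := Fact.out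
      exact ENNReal.toReal_pos (by intro h; rw [h] at h1; simp at h1) hp
    exact Real.zero_rpow hp0.ne'

lemma delta_bSeq (k : ℕ) : delta (bSeq k) = eSeq k := by
  funext n
  rcases n with _ | m <;>
    simp only [delta, bSeq, eSeq, Nat.add_sub_cancel, Nat.succ_ne_zero, if_false, reduceIte,
      sub_zero] <;>
    split_ifs <;> first | omega | (exfalso; omega) | (norm_num; done) | tauto

lemma delta_eSeq (k : ℕ) : delta (eSeq k) = eSeq k - eSeq (k + 1) := by
  funext n
  rcases n with _ | m <;>
    simp only [delta, eSeq, Pi.sub_apply, Nat.add_sub_cancel, Nat.succ_ne_zero, if_false,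
      reduceIte, sub_zero] <;>
    split_ifs <;> first | omega | (exfalso; omega) | (norm_num; done) | tauto

/-- The element `b^{(k+1)}` of `bv_p`. -/
def bvB (p : ℝ≥0∞) [Fact (1 ≤ p)] (k : ℕ) : bv p :=
  ⟨bSeq k, show Memℓp (delta (bSeq k)) p by rw [delta_bSeq]; exact memℓp_eSeq p k⟩

/-- The element `e^{(k+1)}` of `bv_p`. -/
def bvE (p : ℝ≥0∞) [Fact (1 ≤ p)] (k : ℕ) : bv p :=
  ⟨eSeq k, show Memℓp (delta (eSeq k)) p by
    rw [delta_eSeq]; exact (memℓp_eSeq p k).sub (memℓp_eSeq p (k + 1))⟩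

/-- The partial sums `∑_{i=k}^n x_i` of the tail series starting at position `k`. -/
def tailPartial (x : ℕ → ℂ) (k : ℕ) : ℕ → ℂ := fun n => ∑ i ∈ Finset.Icc k n, x i

/-- The sum `∑_{i=k}^∞ x_i` of the tail series (a junk value if the series diverges). -/
noncomputable def tailSum (x : ℕ → ℂ) (k : ℕ) : ℂ := limUnder atTop (tailPartial x k)

/-- Membership in the sequence space `d_∞`: every tail series `∑_{i=k}^∞ x_i` converges and
the suprema of the moduli of the tail sums is finite. -/
def memDInfty (x : ℕ → ℂ) : Prop :=
  ∃ s : ℕ → ℂ, (∀ k, Filter.Tendsto (tailPartial x k) atTop (𝓝 (s k))) ∧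
    BddAbove (Set.range fun k => ‖s k‖)

/-- Membership in the sequence space `d_q`: every tail series `∑_{i=k}^∞ x_i` converges and
`∑_k |∑_{i=k}^∞ x_i|^q < ∞`. -/
def memDq (q : ℝ) (x : ℕ → ℂ) : Prop :=
  (∀ k, ∃ s : ℂ, Filter.Tendsto (tailPartial x k) atTop (𝓝 s)) ∧
    Summable fun k => ‖tailSum x k‖ ^ q

/-- The `ℓ^q`-norm of a sequence. -/
noncomputable def lqNorm (q : ℝ) (a : ℕ → ℂ) : ℝ := (∑' k, ‖a k‖ ^ q) ^ (1 / q)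

/-- The `d_q`-norm of a sequence. -/
noncomputable def dqNorm (q : ℝ) (x : ℕ → ℂ) : ℝ := (∑' k, ‖tailSum x k‖ ^ q) ^ (1 / q)

/-- The supremum norm of a sequence. -/
noncomputable def supNorm (a : ℕ → ℂ) : ℝ := ⨆ k, ‖a k‖

/-- The `d_∞`-norm of a sequence. -/
noncomputable def dInftyNorm (x : ℕ → ℂ) : ℝ := ⨆ k, ‖tailSum x k‖

/-!
`Δ` maps `bv_p` isometrically onto `ℓ^p`, so `bv_p* ≅ (ℓ^p)* ≅ ℓ^q`, the last step via
`F ↦ (F e_k)_k`: Hölder's inequality bounds `‖F‖` by the `ℓ^q`-norm of the coefficients, and the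
test vectors `(conj a_k ‖a_k‖^(q-2))_k` from its equality case give the reverse bound. Finally
`a ↦ (a_k - a_{k+1})_k` maps `ℓ^q` onto `d_q`: since `a_k → 0`, its tail sums telescope back to `a`.
-/
open ComplexConjugate

section HolderDual

variable {𝕜 : Type*} [RCLike 𝕜]

def holderDual (r : ℝ) (a : 𝕜) : 𝕜 := conj a * ((‖a‖ ^ (r - 2) : ℝ) : 𝕜)

lemma holderDual_mul_self {r : ℝ} (hr : r ≠ 0) (a : 𝕜) :
    holderDual r a * a = ((‖a‖ ^ r : ℝ) : 𝕜) := by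
  rcases eq_or_ne a 0 with rfl | ha
  · simp [holderDual, Real.zero_rpow hr]
  · have ha' : 0 < ‖a‖ := norm_pos_iff.mpr ha
    rw [holderDual, mul_right_comm, RCLike.conj_mul, ← RCLike.ofReal_pow, ← RCLike.ofReal_mul,
      ← Real.rpow_natCast, ← Real.rpow_add ha']
    norm_num

lemma norm_holderDual {r : ℝ} (hr : r ≠ 1) (a : 𝕜) : ‖holderDual r a‖ = ‖a‖ ^ (r - 1) := by
  rcases eq_or_ne a 0 with rfl | ha
  · simp [holderDual, Real.zero_rpow (sub_ne_zero.mpr hr)]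
  · have ha' : 0 < ‖a‖ := norm_pos_iff.mpr ha
    rw [holderDual, norm_mul, RCLike.norm_conj, RCLike.norm_ofReal,
      abs_of_nonneg (by positivity), ← Real.rpow_one_add' ha'.le (by contrapose! hr; linarith)]
    ring_nf

end HolderDual

lemma le_rpow_of_le_mul_rpow {p q S C : ℝ} (hpq : p.HolderConjugate q) (hS : 0 ≤ S) (hC : 0 ≤ C)
    (h : S ≤ C * S ^ p⁻¹) : S ≤ C ^ q := by
  rcases hS.eq_or_lt with rfl | hS
  · positivity
  have hSq : S ^ q⁻¹ ≤ C := by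
    have hSp : 0 < S ^ p⁻¹ := by positivity
    rw [← mul_le_mul_iff_of_pos_left hSp, ← Real.rpow_add hS, hpq.inv_add_inv_eq_one,
      Real.rpow_one, mul_comm]
    exact h
  calc S = (S ^ q⁻¹) ^ q := by rw [Real.rpow_inv_rpow hS.le hpq.symm.ne_zero]
    _ ≤ C ^ q := by gcongr; exact hpq.symm.pos.le

namespace lp

variable {ι 𝕜 : Type*} [RCLike 𝕜] {p q : ℝ≥0∞} [Fact (1 ≤ p)] [Fact (1 ≤ q)]

section Pairing

variable [p.HolderConjugate q]

variable (𝕜) in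
/-- Hölder pairing `a ↦ (x ↦ ∑' i, a i * x i)` of `ℓ^q` into the dual of `ℓ^p`. -/
noncomputable def holderPairing : lp (fun _ : ι => 𝕜) q →L[𝕜] lp (fun _ : ι => 𝕜) p →L[𝕜] 𝕜 :=
  lp.dualPairing q p (fun _ => ContinuousLinearMap.mul 𝕜 𝕜) (K := 1)
    fun _ => (ContinuousLinearMap.opNorm_mul_le 𝕜 𝕜).trans_eq NNReal.coe_one.symm

lemma norm_holderPairing_apply_le (a : lp (fun _ : ι => 𝕜) q) :
    ‖holderPairing 𝕜 (p := p) a‖ ≤ ‖a‖ :=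
  (ContinuousLinearMap.le_opNorm _ a).trans
    (mul_le_of_le_one_left (norm_nonneg a) (lp.norm_dualPairing _ _))

lemma holderPairing_apply_single [DecidableEq ι] (a : lp (fun _ : ι => 𝕜) q) (i : ι) :
    holderPairing 𝕜 a (lp.single p i 1) = a i := by
  rw [holderPairing, lp.dualPairing_apply, tsum_eq_single i fun j hj => by simp [hj]]
  simp

end Pairing

variable [DecidableEq ι]

lemma hasSum_mul_apply_single (hp : p ≠ ∞) (F : lp (fun _ : ι => 𝕜) p →L[𝕜] 𝕜)
    (x : lp (fun _ : ι => 𝕜) p) : HasSum (fun i => x i * F (lp.single p i 1)) (F x) := by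
  convert (lp.hasSum_single hp x).mapL F using 2 with i
  rw [← smul_eq_mul, ← map_smul, ← lp.single_smul, smul_eq_mul, mul_one]

variable [p.HolderConjugate q]

lemma sum_norm_apply_single_rpow_le (hp : p ≠ ∞) (hq : q ≠ ∞)
    (F : lp (fun _ : ι => 𝕜) p →L[𝕜] 𝕜) (s : Finset ι) :
    ∑ i ∈ s, ‖F (lp.single p i 1)‖ ^ q.toReal ≤ ‖F‖ ^ q.toReal := by
  have hp0 : 0 < p.toReal := ENNReal.toReal_pos (zero_lt_one.trans_le Fact.out).ne' hp
  have hq0 : 0 < q.toReal := ENNReal.toReal_pos (zero_lt_one.trans_le Fact.out).ne' hq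
  have hpq : p.toReal.HolderConjugate q.toReal := ENNReal.HolderTriple.toReal 1 hp0 hq0
  set a := fun i => F (lp.single p i 1)
  set S := ∑ i ∈ s, ‖a i‖ ^ q.toReal
  set x : lp (fun _ : ι => 𝕜) p := ∑ i ∈ s, lp.single p i (holderDual q.toReal (a i))
  have hFx : F x = (S : 𝕜) := by
    simp only [x, S, map_sum]
    refine Finset.sum_congr rfl fun i _ => ?_
    rw [← mul_one (holderDual _ _), ← smul_eq_mul, lp.single_smul, map_smul, smul_eq_mul,
      holderDual_mul_self hq0.ne']
  have hx : ‖x‖ ^ p.toReal = S := by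
    rw [lp.norm_sum_single hp0]
    refine Finset.sum_congr rfl fun i _ => ?_
    rw [norm_holderDual (sub_ne_zero.mp hpq.symm.sub_one_ne_zero), ← Real.rpow_mul (norm_nonneg _),
      hpq.symm.sub_one_mul_conj]
  refine le_rpow_of_le_mul_rpow hpq (by positivity) (norm_nonneg F) ?_
  calc S = ‖F x‖ := by rw [hFx, RCLike.norm_ofReal, abs_of_nonneg (by positivity)]
    _ ≤ ‖F‖ * ‖x‖ := F.le_opNorm x
    _ = ‖F‖ * S ^ p.toReal⁻¹ := by rw [← hx, Real.rpow_rpow_inv (norm_nonneg x) hp0.ne']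

variable (ι 𝕜) in
noncomputable def dualCoeffs (hp : p ≠ ∞) (hq : q ≠ ∞) :
    (lp (fun _ : ι => 𝕜) p →L[𝕜] 𝕜) →ₗ[𝕜] lp (fun _ : ι => 𝕜) q where
  toFun F := ⟨fun i => F (lp.single p i 1), memℓp_gen' (sum_norm_apply_single_rpow_le hp hq F)⟩
  map_add' _ _ := rfl
  map_smul' _ _ := rfl

lemma holderPairing_dualCoeffs (hp : p ≠ ∞) (hq : q ≠ ∞) (F : lp (fun _ : ι => 𝕜) p →L[𝕜] 𝕜) :
    holderPairing 𝕜 (dualCoeffs ι 𝕜 hp hq F) = F := by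
  ext x
  rw [holderPairing, lp.dualPairing_apply, ← (hasSum_mul_apply_single hp F x).tsum_eq]
  exact tsum_congr fun i => mul_comm _ _

lemma norm_dualCoeffs (hp : p ≠ ∞) (hq : q ≠ ∞) (F : lp (fun _ : ι => 𝕜) p →L[𝕜] 𝕜) :
    ‖dualCoeffs ι 𝕜 hp hq F‖ = ‖F‖ := by
  refine le_antisymm ?_ ?_
  · exact lp.norm_le_of_forall_sum_le (ENNReal.toReal_pos (zero_lt_one.trans_le Fact.out).ne' hq)
      (norm_nonneg F) (sum_norm_apply_single_rpow_le hp hq F)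
  · conv_lhs => rw [← holderPairing_dualCoeffs hp hq F]
    exact norm_holderPairing_apply_le _

lemma dualCoeffs_surjective (hp : p ≠ ∞) (hq : q ≠ ∞) :
    Function.Surjective (dualCoeffs ι 𝕜 hp hq) :=
  fun a => ⟨holderPairing 𝕜 a, lp.ext <| funext <| holderPairing_apply_single a⟩

variable (ι 𝕜) in
noncomputable def dualEquiv (hp : p ≠ ∞) (hq : q ≠ ∞) :
    (lp (fun _ : ι => 𝕜) p →L[𝕜] 𝕜) ≃ₗᵢ[𝕜] lp (fun _ : ι => 𝕜) q :=
  LinearIsometryEquiv.ofSurjective ⟨dualCoeffs ι 𝕜 hp hq, norm_dualCoeffs hp hq⟩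
    (dualCoeffs_surjective hp hq)

end lp

lemma Memℓp.tendsto_atTop_zero {E : Type*} [NormedAddCommGroup E] {q : ℝ≥0∞} (hq0 : q ≠ 0)
    (hq : q ≠ ∞) {a : ℕ → E} (ha : Memℓp a q) : Tendsto a atTop (𝓝 0) := by
  have hq' : 0 < q.toReal := ENNReal.toReal_pos hq0 hq
  rw [tendsto_zero_iff_norm_tendsto_zero]
  have h := (ha.summable hq').tendsto_atTop_zero.rpow_const (p := q.toReal⁻¹)
    (Or.inr (by positivity))
  rw [Real.zero_rpow (inv_ne_zero hq'.ne')] at h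
  exact h.congr fun k => Real.rpow_rpow_inv (norm_nonneg _) hq'.ne'

noncomputable def LinearIsometryEquiv.precomp {𝕜 E F : Type*} (G : Type*)
    [NontriviallyNormedField 𝕜] [NormedAddCommGroup E] [NormedSpace 𝕜 E] [NormedAddCommGroup F] [NormedSpace 𝕜 F]
    [NormedAddCommGroup G] [NormedSpace 𝕜 G] (e : E ≃ₗᵢ[𝕜] F) :
    (F →L[𝕜] G) ≃ₗᵢ[𝕜] (E →L[𝕜] G) where
  toFun f := f.comp (e : E →L[𝕜] F)
  invFun f := f.comp (e.symm : F →L[𝕜] E)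
  map_add' _ _ := rfl
  map_smul' _ _ := rfl
  left_inv f := by ext; simp
  right_inv f := by ext; simp
  norm_map' f := f.opNorm_comp_linearIsometryEquiv e

namespace bv

lemma toLp_surjective (p : ℝ≥0∞) : Function.Surjective (toLp p) := fun y =>
  ⟨⟨deltaL.symm y, show Memℓp (deltaL (deltaL.symm y)) p by
      rw [deltaL.apply_symm_apply]; exact y.2⟩,
    lp.ext (deltaL.apply_symm_apply y)⟩

variable (p : ℝ≥0∞) [Fact (1 ≤ p)]

noncomputable def toLpEquiv : bv p ≃ₗᵢ[ℂ] lp (fun _ : ℕ => ℂ) p :=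
  LinearIsometryEquiv.ofSurjective ⟨toLp p, fun _ => rfl⟩ (toLp_surjective p)

noncomputable def dualEquiv {q : ℝ≥0∞} [Fact (1 ≤ q)] [p.HolderConjugate q] (hp : p ≠ ∞)
    (hq : q ≠ ∞) : (bv p →L[ℂ] ℂ) ≃ₗᵢ[ℂ] lp (fun _ : ℕ => ℂ) q :=
  ((toLpEquiv p).symm.precomp ℂ).trans (lp.dualEquiv ℕ ℂ hp hq)

end bv

def tailDiff : (ℕ → ℂ) →ₗ[ℂ] (ℕ → ℂ) where
  toFun a k := a k - a (k + 1)
  map_add' a b := by ext; simp only [Pi.add_apply]; ring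
  map_smul' c a := by ext; simp only [Pi.smul_apply, smul_eq_mul, RingHom.id_apply]; ring

lemma tailPartial_tailDiff (a : ℕ → ℂ) {k n : ℕ} (h : k ≤ n) :
    tailPartial (tailDiff a) k n = a k - a (n + 1) := by
  rw [tailPartial, ← Finset.Ico_add_one_right_eq_Icc, ← neg_sub, ← Finset.sum_Ico_sub _ (by omega),
    ← Finset.sum_neg_distrib]
  exact Finset.sum_congr rfl fun i _ => (neg_sub _ _).symm

lemma tendsto_tailPartial_tailDiff {a : ℕ → ℂ} (ha : Tendsto a atTop (𝓝 0)) (k : ℕ) :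
    Tendsto (tailPartial (tailDiff a) k) atTop (𝓝 (a k)) := by
  have h := (tendsto_const_nhds (x := a k)).sub (ha.comp (tendsto_add_atTop_nat 1))
  rw [sub_zero] at h
  refine h.congr' ?_
  filter_upwards [eventually_ge_atTop k] with n hn
  exact (tailPartial_tailDiff a hn).symm

lemma tailSum_tailDiff {a : ℕ → ℂ} (ha : Tendsto a atTop (𝓝 0)) : tailSum (tailDiff a) = a :=
  funext fun k => (tendsto_tailPartial_tailDiff ha k).limUnder_eq

lemma tailDiff_tailSum {x : ℕ → ℂ} (hx : ∀ k, ∃ s, Tendsto (tailPartial x k) atTop (𝓝 s)) :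
    tailDiff (tailSum x) = x := by
  have hconv k : Tendsto (tailPartial x k) atTop (𝓝 (tailSum x k)) := by
    obtain ⟨s, hs⟩ := hx k
    rwa [tailSum, hs.limUnder_eq]
  funext k
  have hsplit : ∀ᶠ n in atTop, x k + tailPartial x (k + 1) n = tailPartial x k n := by
    filter_upwards [eventually_ge_atTop k] with n hn
    rw [tailPartial, tailPartial, ← Finset.add_sum_Ioc_eq_sum_Icc hn,
      Finset.Icc_add_one_left_eq_Ioc]
  have h := tendsto_nhds_unique (hconv k) (((hconv (k + 1)).const_add (x k)).congr' hsplit)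
  show tailSum x k - tailSum x (k + 1) = x k
  rw [h, add_sub_cancel_right]

section

variable {q : ℝ} (hq : 0 < q)
include hq

lemma tendsto_lp_ofReal_atTop_zero (a : lp (fun _ : ℕ => ℂ) (ENNReal.ofReal q)) :
    Tendsto a atTop (𝓝 0) :=
  (lp.memℓp a).tendsto_atTop_zero (ENNReal.ofReal_pos.mpr hq).ne' ENNReal.ofReal_ne_top

lemma memDq_tailDiff (a : lp (fun _ : ℕ => ℂ) (ENNReal.ofReal q)) : memDq q (tailDiff a) := by
  have ha := tendsto_lp_ofReal_atTop_zero hq a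
  refine ⟨fun k => ⟨a k, tendsto_tailPartial_tailDiff ha k⟩, ?_⟩
  rw [tailSum_tailDiff ha]
  simpa [ENNReal.toReal_ofReal hq.le] using
    (lp.memℓp a).summable (by rwa [ENNReal.toReal_ofReal hq.le])

lemma dqNorm_tailDiff (a : lp (fun _ : ℕ => ℂ) (ENNReal.ofReal q)) :
    dqNorm q (tailDiff a) = ‖a‖ := by
  rw [dqNorm, tailSum_tailDiff (tendsto_lp_ofReal_atTop_zero hq a),
    lp.norm_eq_tsum_rpow (by rwa [ENNReal.toReal_ofReal hq.le]), ENNReal.toReal_ofReal hq.le]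

lemma tailDiff_lp_injective :
    Function.Injective fun a : lp (fun _ : ℕ => ℂ) (ENNReal.ofReal q) => tailDiff a :=
  fun a b h => lp.ext <| by
    rw [← tailSum_tailDiff (tendsto_lp_ofReal_atTop_zero hq a),
      ← tailSum_tailDiff (tendsto_lp_ofReal_atTop_zero hq b)]
    exact congrArg tailSum h

lemma exists_tailDiff_eq_of_memDq {x : ℕ → ℂ} (hx : memDq q x) :
    ∃ a : lp (fun _ : ℕ => ℂ) (ENNReal.ofReal q), tailDiff a = x :=
  ⟨⟨tailSum x, memℓp_gen (by simpa [ENNReal.toReal_ofReal hq.le] using hx.2)⟩,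
    tailDiff_tailSum hx.1⟩

end

theorem bvp_dual_isometric_dq_general (p q : ℝ) (hp : 1 < p)
    (hpq : 1 / p + 1 / q = 1) [Fact (1 ≤ ENNReal.ofReal p)] :
    ∃ g : (bv (ENNReal.ofReal p) →L[ℂ] ℂ) →ₗ[ℂ] (ℕ → ℂ),
      (∀ f, memDq q (g f)) ∧ Function.Injective g ∧
      (∀ x : ℕ → ℂ, memDq q x → ∃ f, g f = x) ∧
      (∀ f, dqNorm q (g f) = ‖f‖) := by
  have hpq' : p.HolderConjugate q := Real.holderConjugate_iff.mpr ⟨hp, by simpa using hpq⟩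
  have hq : 0 < q := hpq'.symm.pos
  have : Fact (1 ≤ ENNReal.ofReal q) := ⟨ENNReal.one_le_ofReal.mpr hpq'.symm.lt.le⟩
  have := hpq'.ennrealOfReal
  let Φ := bv.dualEquiv (ENNReal.ofReal p) ENNReal.ofReal_ne_top (q := ENNReal.ofReal q)
    ENNReal.ofReal_ne_top
  refine ⟨tailDiff ∘ₗ (lpSubmodule ℂ _ _).subtype ∘ₗ Φ.toLinearMap,
    fun f => memDq_tailDiff hq (Φ f), fun _ _ h => Φ.injective (tailDiff_lp_injective hq h),
    fun x hx => ?_, fun f => (dqNorm_tailDiff hq (Φ f)).trans (Φ.norm_map f)⟩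
  obtain ⟨a, rfl⟩ := exists_tailDiff_eq_of_memDq hq hx
  refine ⟨Φ.symm a, ?_⟩
  show tailDiff (Φ (Φ.symm a) : ℕ → ℂ) = tailDiff a
  rw [Φ.apply_symm_apply]

/-- For conjugate exponents `1 < p, q < ∞`, the continuous dual of `bv_p`
is isometrically isomorphic to `d_q`: there is a linear bijection from `bv_p*` onto `d_q`
preserving norms. -/
theorem bvp_dual_isometric_dq (p q : ℝ) (hp : 1 < p) (hq : 1 < q)
    (hpq : 1 / p + 1 / q = 1) [Fact (1 ≤ ENNReal.ofReal p)] :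
    ∃ g : (bv (ENNReal.ofReal p) →L[ℂ] ℂ) →ₗ[ℂ] (ℕ → ℂ),
      (∀ f, memDq q (g f)) ∧ Function.Injective g ∧
      (∀ x : ℕ → ℂ, memDq q x → ∃ f, g f = x) ∧
      (∀ f, dqNorm q (g f) = ‖f‖) :=
  bvp_dual_isometric_dq_general p q hp hpq
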